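/- Let L be a nilpotent Lie algebra over ℚ and a, b ∈ L. Define elements Z_r ∈ L recursively by Z₀ = b and Z_{r+1} = (1/(r+1)) ∑_{m≥0} b_m ∑_{i₁+⋯+i_m = r, i_j ≥ 0} ad(Z_{i₁}) ad(Z_{i₂}) ⋯ ad(Z_{i_m})(a) (all but finitely many terms vanish by nilpotency). Then for every r ≥ 0, Z_r = ∑_{(Γ,f) ∈ 𝒞_r} b_{(Γ,f)} Z_Γ(f), where leaves labelled b (resp. a) are evaluated at b (resp. a) and all but finitely many summands vanish by nilpotency. -/

import Mathlib

/-- A (planar) binary rooted tree with leaves labelled by elements of `A`.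
`node l r` has left subtree `l` and right subtree `r`. -/
inductive LTree (A : Type) : Type
  | leaf (a : A) : LTree A
  | node (l r : LTree A) : LTree A

namespace LTree

variable {A : Type}

/-- The list of leaf labels, from left to right. -/
def leafList : LTree A → List A
  | leaf a => [a]
  | node l r => leafList l ++ leafList r

/-- The number of leaves. -/
def numLeaves (t : LTree A) : ℕ := (leafList t).length

/-- The label of the rightmost leaf, i.e. of `m(root)`. -/
def rml : LTree A → A
  | leaf a => a
  | node _ r => rml r

/-- The length `d(v)` of the rightmost path from the root `v` to `m(v)`. -/
def rdepth : LTree A → ℕ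
  | leaf _ => 0
  | node _ r => rdepth r + 1

/-- Monotonicity of the leaf labelling `f : (L(Γ), ⪯) → A`:  for every subroot `v`
and every leaf `u → v` one has `f u ≤ f (m v)`.  (The subroots of `node l r` are the
root together with the subroots of `l` and the subroots of `r` other than the root of
`r`; the condition at the root of `r` is implied by the one at the root, since
`m(root) = m(root of r)`.) -/
def Mono [Preorder A] : LTree A → Prop
  | leaf _ => True
  | node l r => (∀ x ∈ leafList l ++ leafList r, x ≤ rml r) ∧ Mono l ∧ Mono r

mutual
  /-- The coefficient `b_{(Γ,f)} = ∏_{v ∈ R(Γ)} bn (d v) / t v` attached to a posetted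
  tree, for a sequence `bn` of scalars. -/
  def coeff {K : Type} [Field K] [DecidableEq A] (bn : ℕ → K) : LTree A → K
    | leaf _ => 1
    | node l r =>
        (bn (rdepth r + 1) / (((leafList l ++ leafList r).count (rml r) : ℕ) : K))
          * coeff bn l * coeffAux bn r
  /-- Product of `bn (d v) / t v` over the subroots of the tree other than its root. -/
  def coeffAux {K : Type} [Field K] [DecidableEq A] (bn : ℕ → K) : LTree A → K
    | leaf _ => 1
    | node l r => coeff bn l * coeffAux bn r
end

/-- The evaluation `Z_Γ(f)` of a leaf-labelled binary tree in a Lie algebra: take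
the bracket at every internal vertex. -/
def evalT {L : Type} [LieRing L] (g : A → L) : LTree A → L
  | leaf a => g a
  | node l r => ⁅evalT g l, evalT g r⁆

end LTree

/-- `bseq n = B_n / n!`, where `B_n` is the `n`-th Bernoulli number
(convention `B₁ = -1/2`). -/
noncomputable def bseq (n : ℕ) : ℚ := bernoulli n / n.factorial

section BCH

variable {L : Type} [LieRing L] [LieAlgebra ℚ L]

/-- `adn x n = ad(x)^n`. -/
def adn (x : L) (n : ℕ) : L → L := (fun y => ⁅x, y⁆)^[n]

/-- The summand `ad(a)^{p₁}ad(b)^{q₁}⋯ad(a)^{p_n}ad(b)^{q_n−1} b` of Dynkin's formula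
(reading `⋯ad(a)^{p_n−1} a` when `q_n = 0`). -/
def dynkinWord (a b : L) : List (ℕ × ℕ) → L
  | [] => 0
  | [(p, q)] => if q = 0 then adn a (p - 1) a else adn a p (adn b (q - 1) b)
  | (p, q) :: x :: l => adn a p (adn b q (dynkinWord a b (x :: l)))

/-- The coefficient `((-1)^{n-1}/n) ⬝ (1/(p₁!q₁!⋯p_n!q_n!))` of Dynkin's formula. -/
noncomputable def dynkinCoeff (pl : List (ℕ × ℕ)) : ℚ :=
  ((-1 : ℚ) ^ (pl.length - 1) / (pl.length : ℚ)) *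
    ((pl.map fun pq => ((pq.1.factorial * pq.2.factorial : ℕ) : ℚ)).prod)⁻¹

/-- The Baker–Campbell–Hausdorff product, defined by Dynkin's formula; on a nilpotent
Lie algebra all but finitely many summands vanish. -/
noncomputable def bch (a b : L) : L :=
  ∑ᶠ pl ∈ {pl : List (ℕ × ℕ) | pl ≠ [] ∧ ∀ pq ∈ pl, 0 < pq.1 + pq.2},
    dynkinCoeff pl • dynkinWord a b pl

end BCH

namespace LTree

/-- `AllRlm P t` holds iff every local rightmost leaf of `t` has its label satisfying
`P`.  (The local rightmost leaves of `node l r` are the rightmost leaf, of label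
`rml r`, together with the local rightmost leaves of `l` and of `r`; a single leaf lies
on no nontrivial rightmost branch.) -/
def AllRlm {A : Type} (P : A → Prop) : LTree A → Prop
  | leaf _ => True
  | node l r => P (rml r) ∧ AllRlm P l ∧ AllRlm P r

end LTree

deriving instance DecidableEq for LTree

namespace LTree

variable {A : Type}

def decAllRlm (P : A → Prop) [DecidablePred P] : (t : LTree A) → Decidable (AllRlm P t)
  | .leaf _ => .isTrue (by rw [AllRlm]; trivial)
  | .node l r =>
      haveI := decAllRlm P l; haveI := decAllRlm P r
      decidable_of_iff (P (rml r) ∧ AllRlm P l ∧ AllRlm P r) (by rw [AllRlm])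

instance (P : A → Prop) [DecidablePred P] : DecidablePred (AllRlm P) := decAllRlm P

@[simp] lemma leafList_leaf (a : A) : leafList (leaf a) = [a] := rfl
@[simp] lemma leafList_node (l r : LTree A) :
    leafList (node l r) = leafList l ++ leafList r := rfl
@[simp] lemma rml_node (l r : LTree A) : rml (node l r) = rml r := rfl
@[simp] lemma rml_leaf (a : A) : rml (leaf a) = a := rfl
@[simp] lemma evalT_leaf {L : Type} [LieRing L] (g : A → L) (a : A) :
    evalT g (leaf a) = g a := rfl
@[simp] lemma evalT_node {L : Type} [LieRing L] (g : A → L) (l r : LTree A) :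
    evalT g (node l r) = ⁅evalT g l, evalT g r⁆ := rfl
@[simp] lemma coeff_leaf {K : Type} [Field K] [DecidableEq A] (bn : ℕ → K) (a : A) :
    coeff bn (leaf a) = 1 := by rw [coeff]
@[simp] lemma coeffAux_leaf {K : Type} [Field K] [DecidableEq A] (bn : ℕ → K) (a : A) :
    coeffAux bn (leaf a) = 1 := by rw [coeffAux]
lemma coeff_node {K : Type} [Field K] [DecidableEq A] (bn : ℕ → K) (l r : LTree A) :
    coeff bn (node l r) = (bn (rdepth r + 1) /
      (((leafList l ++ leafList r).count (rml r) : ℕ) : K)) * coeff bn l * coeffAux bn r := by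
  rw [coeff]
lemma coeffAux_node {K : Type} [Field K] [DecidableEq A] (bn : ℕ → K) (l r : LTree A) :
    coeffAux bn (node l r) = coeff bn l * coeffAux bn r := by rw [coeffAux]

lemma leafList_ne_nil (t : LTree A) : leafList t ≠ [] := by
  induction t with
  | leaf a => simp
  | node l r ihl ihr => simp [ihl]

lemma one_le_numLeaves (t : LTree A) : 1 ≤ t.numLeaves :=
  List.length_pos_iff.mpr (leafList_ne_nil t)

@[simp] lemma numLeaves_node (l r : LTree A) :
    numLeaves (node l r) = numLeaves l + numLeaves r := by simp [numLeaves]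

@[simp] lemma numLeaves_leaf (a : A) : numLeaves (leaf a) = 1 := rfl

lemma rml_mem_leafList (t : LTree A) : rml t ∈ leafList t := by
  induction t with
  | leaf a => simp
  | node l r ihl ihr => simp [ihr]

lemma mono_of_allRlm (t : LTree (Fin 2)) (h : AllRlm (· = (1 : Fin 2)) t) : Mono t := by
  induction t with
  | leaf a => trivial
  | node l r ihl ihr =>
    rw [AllRlm] at h
    exact ⟨fun x _ => h.1 ▸ Fin.le_last x, ihl h.2.1, ihr h.2.2⟩

end LTree

open LTree

/-- Finset of trees containing all trees with at most `n` leaves. -/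
def treesUpTo : ℕ → Finset (LTree (Fin 2))
  | 0 => ∅
  | n + 1 => {LTree.leaf 0, LTree.leaf 1} ∪
      ((treesUpTo n ×ˢ treesUpTo n).image fun p => LTree.node p.1 p.2)

lemma mem_treesUpTo : ∀ (n : ℕ) (t : LTree (Fin 2)), t.numLeaves ≤ n → t ∈ treesUpTo n
  | 0, t, h => absurd (le_trans (one_le_numLeaves t) h) (by norm_num)
  | n + 1, .leaf x, _ => by fin_cases x <;> simp [treesUpTo]
  | n + 1, .node l r, h => by
    have h1 := one_le_numLeaves l
    have h2 := one_le_numLeaves r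
    have hn : numLeaves (LTree.node l r) = numLeaves l + numLeaves r := by simp
    have hl := mem_treesUpTo n l (by omega)
    have hr := mem_treesUpTo n r (by omega)
    simp only [treesUpTo, Finset.mem_union, Finset.mem_image, Finset.mem_product]
    exact Or.inr ⟨(l, r), ⟨hl, hr⟩, rfl⟩

/-- Finset of lists containing all lists with entries in `s` of length at most `n`. -/
def listsUpTo {α : Type*} [DecidableEq α] (s : Finset α) : ℕ → Finset (List α)
  | 0 => {[]}
  | n + 1 => {[]} ∪ ((s ×ˢ listsUpTo s n).image fun p => p.1 :: p.2)

lemma mem_listsUpTo {α : Type*} [DecidableEq α] (s : Finset α) :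
    ∀ (n : ℕ) (l : List α), l.length ≤ n → (∀ x ∈ l, x ∈ s) → l ∈ listsUpTo s n
  | 0, l, h, _ => by
    rw [List.length_eq_zero_iff.mp (Nat.le_zero.mp h)]; simp [listsUpTo]
  | n + 1, [], _, _ => by simp [listsUpTo]
  | n + 1, x :: l, h, hx => by
    have hl := mem_listsUpTo s n l (by simpa using Nat.lt_succ_iff.mp h)
      (fun y hy => hx y (List.mem_cons_of_mem _ hy))
    simp only [listsUpTo, Finset.mem_union, Finset.mem_image, Finset.mem_product]
    exact Or.inr ⟨(x, l), ⟨hx x (List.mem_cons_self), hl⟩, rfl⟩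

section Nilp

variable {L : Type} [LieRing L] [LieAlgebra ℚ L]

lemma evalT_mem_lcs {A : Type} (g : A → L) :
    ∀ (k : ℕ) (t : LTree A), 2 ^ k ≤ t.numLeaves →
      LTree.evalT g t ∈ LieModule.lowerCentralSeries ℚ L L k
  | 0, t, _ => by simp
  | k + 1, .leaf x, h => by
    exfalso
    have h2 : (2:ℕ) ≤ 2 ^ (k+1) :=
      calc (2:ℕ) = 2 ^ 1 := rfl
      _ ≤ 2 ^ (k+1) := Nat.pow_le_pow_right (by norm_num) (by omega)
    simp only [numLeaves_leaf] at h
    omega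
  | k + 1, .node l r, h => by
    have hn : numLeaves (LTree.node l r) = numLeaves l + numLeaves r := by simp
    have hp : 2 ^ (k + 1) = 2 ^ k + 2 ^ k := by rw [pow_succ]; ring
    have : 2 ^ k ≤ numLeaves l ∨ 2 ^ k ≤ numLeaves r := by omega
    rw [LieModule.lowerCentralSeries_succ]
    rcases this with hc | hc
    · have hm := evalT_mem_lcs g k l hc
      have heq : evalT g (LTree.node l r) = -⁅evalT g r, evalT g l⁆ := by
        rw [evalT_node, ← lie_skew]
      rw [heq]
      exact neg_mem (LieSubmodule.lie_mem_lie (LieSubmodule.mem_top _) hm)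
    · have hm := evalT_mem_lcs g k r hc
      exact LieSubmodule.lie_mem_lie (LieSubmodule.mem_top _) hm

lemma foldr_mem_lcs :
    ∀ (xs : List L) (c : L),
      xs.foldr (fun x w => ⁅x, w⁆) c ∈ LieModule.lowerCentralSeries ℚ L L xs.length
  | [], c => by simp
  | x :: xs, c => by
    rw [List.foldr_cons, List.length_cons, LieModule.lowerCentralSeries_succ]
    exact LieSubmodule.lie_mem_lie (LieSubmodule.mem_top _) (foldr_mem_lcs xs c)

lemma foldr_eq_zero_of_mem_zero :
    ∀ (xs : List L) (c : L), (0 : L) ∈ xs → xs.foldr (fun x w => ⁅x, w⁆) c = 0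
  | [], _, h => absurd h List.not_mem_nil
  | x :: xs, c, h => by
    rcases List.mem_cons.mp h with h0 | h0
    · rw [List.foldr_cons, ← h0, zero_lie]
    · rw [List.foldr_cons, foldr_eq_zero_of_mem_zero xs c h0, lie_zero]

lemma sum_lie' {ι : Type*} (s : Finset ι) (f : ι → L) (y : L) :
    ⁅∑ i ∈ s, f i, y⁆ = ∑ i ∈ s, ⁅f i, y⁆ := by
  classical
  induction s using Finset.induction_on with
  | empty => simp
  | insert _ _ hx ih => rw [Finset.sum_insert hx, Finset.sum_insert hx, add_lie, ih]

lemma lie_sum' {ι : Type*} (s : Finset ι) (f : ι → L) (y : L) :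
    ⁅y, ∑ i ∈ s, f i⁆ = ∑ i ∈ s, ⁅y, f i⁆ := by
  classical
  induction s using Finset.induction_on with
  | empty => simp
  | insert _ _ hx ih => rw [Finset.sum_insert hx, Finset.sum_insert hx, lie_add, ih]

end Nilp


section Comb

/-- count of leaves labelled `1`. -/
def cnt (t : LTree (Fin 2)) : ℕ := (leafList t).count 1

def Cset (i : ℕ) : Set (LTree (Fin 2)) :=
  {t | AllRlm (· = (1 : Fin 2)) t ∧ cnt t = i}

def Tfin (K i : ℕ) : Finset (LTree (Fin 2)) :=
  (treesUpTo K).filter fun t => AllRlm (· = (1 : Fin 2)) t ∧ cnt t = i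

def TL (K : ℕ) : List ℕ → Finset (List (LTree (Fin 2)))
  | [] => {[]}
  | i :: l => ((Tfin K i) ×ˢ (TL K l)).image fun p => p.1 :: p.2

lemma mem_TL {K : ℕ} : ∀ (l : List ℕ) (ts : List (LTree (Fin 2))),
    ts ∈ TL K l ↔ List.Forall₂ (fun i t => t ∈ Tfin K i) l ts
  | [], ts => by simp [TL, List.forall₂_nil_left_iff, eq_comm]
  | i :: l, ts => by
    simp only [TL, Finset.mem_image, Finset.mem_product, List.forall₂_cons_left_iff]
    constructor
    · rintro ⟨⟨t, ts'⟩, ⟨h1, h2⟩, rfl⟩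
      exact ⟨t, ts', h1, (mem_TL l ts').mp h2, rfl⟩
    · rintro ⟨t, ts', h1, h2, rfl⟩
      exact ⟨(t, ts'), ⟨h1, (mem_TL l ts').mpr h2⟩, rfl⟩

def fromList : List (LTree (Fin 2)) → LTree (Fin 2)
  | [] => LTree.leaf 1
  | t :: ts => LTree.node t (fromList ts)

def toList : LTree (Fin 2) → List (LTree (Fin 2))
  | .leaf _ => []
  | .node l r => l :: toList r

@[simp] lemma rml_fromList : ∀ ts, rml (fromList ts) = 1
  | [] => rfl
  | t :: ts => by simp [fromList, rml_fromList ts]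

@[simp] lemma rdepth_fromList : ∀ ts : List (LTree (Fin 2)), rdepth (fromList ts) = ts.length
  | [] => rfl
  | t :: ts => by simp [fromList, rdepth, rdepth_fromList ts]

lemma cnt_fromList : ∀ ts : List (LTree (Fin 2)),
    cnt (fromList ts) = (ts.map cnt).sum + 1
  | [] => by simp [fromList, cnt]
  | t :: ts => by
    simp only [fromList, cnt, leafList_node, List.count_append, List.map_cons, List.sum_cons]
    rw [← cnt, ← cnt, cnt_fromList ts]
    omega

lemma allRlm_fromList : ∀ ts : List (LTree (Fin 2)),
    (AllRlm (· = (1 : Fin 2)) (fromList ts) ↔ ∀ t ∈ ts, AllRlm (· = (1 : Fin 2)) t)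
  | [] => by simp [fromList, AllRlm]
  | t :: ts => by
    rw [fromList, AllRlm]
    simp only [rml_fromList, List.mem_cons]
    rw [allRlm_fromList ts]
    constructor
    · rintro ⟨-, h1, h2⟩ s hs
      rcases hs with rfl | hs
      exacts [h1, h2 s hs]
    · intro h
      exact ⟨by simp, h t (Or.inl rfl), fun s hs => h s (Or.inr hs)⟩

lemma coeffAux_fromList : ∀ ts : List (LTree (Fin 2)),
    coeffAux bseq (fromList ts) = (ts.map (coeff bseq)).prod
  | [] => by simp [fromList]
  | t :: ts => by
    rw [fromList, coeffAux_node, coeffAux_fromList ts]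
    simp

@[simp] lemma bseq_zero_aux : bseq 0 = 1 := by simp [bseq]

lemma coeff_fromList (ts : List (LTree (Fin 2))) :
    coeff bseq (fromList ts) =
      bseq ts.length / (((ts.map cnt).sum + 1 : ℕ) : ℚ) * (ts.map (coeff bseq)).prod := by
  cases ts with
  | nil => simp [fromList]
  | cons t ts =>
    rw [fromList, coeff_node, rml_fromList, rdepth_fromList, coeffAux_fromList]
    have hc : (LTree.leafList t ++ LTree.leafList (fromList ts)).count 1
        = (cnt t : ℕ) + ((ts.map cnt).sum + 1) := by
      have h2 := cnt_fromList ts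
      simp only [cnt] at h2 ⊢
      rw [List.count_append, h2]
    rw [hc]
    simp only [List.map_cons, List.prod_cons, List.sum_cons, List.length_cons]
    push_cast
    ring

lemma evalT_fromList {L : Type} [LieRing L] (g : Fin 2 → L) :
    ∀ ts : List (LTree (Fin 2)),
      evalT g (fromList ts) = (ts.map (evalT g)).foldr (fun x w => ⁅x, w⁆) (g 1)
  | [] => by simp [fromList]
  | t :: ts => by
    rw [fromList, evalT_node, evalT_fromList g ts]
    simp

@[simp] lemma toList_fromList : ∀ ts : List (LTree (Fin 2)), toList (fromList ts) = ts
  | [] => rfl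
  | t :: ts => by rw [fromList, toList, toList_fromList ts]

lemma fromList_toList : ∀ t : LTree (Fin 2), rml t = 1 → fromList (toList t) = t
  | .leaf x, h => by rw [rml_leaf] at h; rw [toList, fromList, h]
  | .node l r, h => by
    rw [rml_node] at h
    rw [toList, fromList, fromList_toList r h]

lemma allRlm_toList : ∀ t : LTree (Fin 2), AllRlm (· = (1 : Fin 2)) t →
    ∀ s ∈ toList t, AllRlm (· = (1 : Fin 2)) s
  | .leaf x, _ => by simp [toList]
  | .node l r, h => by
    rw [AllRlm] at h
    rw [toList]
    intro s hs
    rcases List.mem_cons.mp hs with rfl | hs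
    · exact h.2.1
    · exact allRlm_toList r h.2.2 s hs

lemma rml_eq_one_of_mem_Cset {t : LTree (Fin 2)} {i : ℕ} (h : t ∈ Cset (i + 1)) :
    rml t = 1 := by
  obtain ⟨h1, h2⟩ := h
  cases t with
  | leaf x =>
    rw [rml_leaf]
    rcases (by decide : ∀ y : Fin 2, y = 0 ∨ y = 1) x with rfl | rfl
    · exfalso
      have h0 : cnt (LTree.leaf (0 : Fin 2)) = 0 := by decide
      rw [h0] at h2
      exact absurd h2 (by omega)
    · rfl
  | node l r => rw [AllRlm] at h1; rw [rml_node]; exact h1.1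

lemma Cset_zero : Cset 0 = {LTree.leaf 0} := by
  ext t
  simp only [Set.mem_singleton_iff, Cset, Set.mem_setOf_eq]
  constructor
  · rintro ⟨h1, h2⟩
    cases t with
    | leaf x =>
      fin_cases x
      · rfl
      · simp [cnt] at h2
    | node l r =>
      exfalso
      rw [AllRlm] at h1
      have := rml_mem_leafList (LTree.node l r)
      rw [rml_node, h1.1] at this
      have : 0 < cnt (LTree.node l r) := List.count_pos_iff.mpr this
      omega
  · rintro rfl
    refine ⟨trivial, ?_⟩
    simp [cnt]

end Comb

lemma of_mem_TL {K : ℕ} {l : List ℕ} {ts : List (LTree (Fin 2))} (h : ts ∈ TL K l) :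
    l = ts.map cnt ∧ ∀ t ∈ ts, t ∈ treesUpTo K ∧ AllRlm (· = (1 : Fin 2)) t := by
  have hf := (mem_TL l ts).mp h
  clear h
  induction hf with
  | nil => simp
  | @cons i t l' ts' h1 h2 ih =>
    obtain ⟨hm, hh⟩ := ih
    obtain ⟨ht1, ht2, ht3⟩ := Finset.mem_filter.mp h1
    constructor
    · rw [List.map_cons, ← hm, ht3]
    · intro s hs
      rcases List.mem_cons.mp hs with rfl | hs
      · exact ⟨ht1, ht2⟩
      · exact hh s hs

section LieSide

variable {L : Type} [LieRing L] [LieAlgebra ℚ L]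

/-- product of coefficients over a list of trees -/
noncomputable def Pprod (ts : List (LTree (Fin 2))) : ℚ := (ts.map (coeff bseq)).prod

/-- iterated bracket over evaluations of a list of trees -/
def Ffold (g : Fin 2 → L) (a : L) (ts : List (LTree (Fin 2))) : L :=
  (ts.map (evalT g)).foldr (fun x w => ⁅x, w⁆) a

lemma evalT_eq_zero (g : Fin 2 → L) {N : ℕ}
    (hN : LieModule.lowerCentralSeries ℚ L L N = ⊥) (t : LTree (Fin 2))
    (h : 2 ^ N ≤ t.numLeaves) : evalT g t = 0 := by
  have hm := evalT_mem_lcs g N t h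
  rw [hN, LieSubmodule.mem_bot] at hm
  exact hm

lemma foldr_eq_zero {N : ℕ} (hN : LieModule.lowerCentralSeries ℚ L L N = ⊥)
    (xs : List L) (c : L) (h : N ≤ xs.length) :
    xs.foldr (fun x w => ⁅x, w⁆) c = 0 := by
  have h2 := foldr_mem_lcs xs c
  have h3 := LieModule.antitone_lowerCentralSeries ℚ L L h
  rw [hN] at h3
  have h4 := h3 h2
  rwa [LieSubmodule.mem_bot] at h4

lemma W_eq_sum (g : Fin 2 → L) {N : ℕ}
    (hN : LieModule.lowerCentralSeries ℚ L L N = ⊥) (i : ℕ) :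
    (∑ᶠ t ∈ Cset i, coeff bseq t • evalT g t)
      = ∑ t ∈ Tfin (2 ^ N) i, coeff bseq t • evalT g t := by
  refine finsum_mem_eq_sum_of_subset _ ?_ ?_
  · rintro t ⟨⟨h1, h2⟩, hs⟩
    rw [Function.mem_support] at hs
    have he : evalT g t ≠ 0 := fun h0 => hs (by rw [h0, smul_zero])
    have hnl : t.numLeaves ≤ 2 ^ N := by
      by_contra hh
      exact he (evalT_eq_zero g hN t (by omega))
    exact Finset.mem_coe.mpr (Finset.mem_filter.mpr ⟨mem_treesUpTo _ t hnl, h1, h2⟩)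
  · intro t ht
    have h2 := Finset.mem_filter.mp (Finset.mem_coe.mp ht)
    exact ⟨h2.2.1, h2.2.2⟩

lemma expansion (g : Fin 2 → L) (a : L) (K : ℕ) :
    ∀ l : List ℕ,
      ((l.map fun i => ∑ t ∈ Tfin K i, coeff bseq t • evalT g t).foldr
          (fun x w => ⁅x, w⁆) a)
        = ∑ ts ∈ TL K l, Pprod ts • Ffold g a ts
  | [] => by simp [TL, Pprod, Ffold]
  | i :: l => by
    rw [List.map_cons, List.foldr_cons, expansion g a K l, sum_lie', TL]
    rw [Finset.sum_image (fun x _ y _ h => by simpa [Prod.ext_iff] using h)]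
    rw [Finset.sum_product]
    refine Finset.sum_congr rfl fun t ht => ?_
    rw [lie_sum']
    refine Finset.sum_congr rfl fun ts hts => ?_
    simp only [Pprod, Ffold, List.map_cons, List.prod_cons, List.foldr_cons]
    rw [smul_lie, lie_smul, smul_smul]

end LieSide

/-- **Theorem.** Let `L` be a nilpotent Lie algebra over `ℚ`, `a b : L`, and let
`Z : ℕ → L` satisfy `Z 0 = b` and the recursion
`Z_{r+1} = (1/(r+1)) ∑_{m≥0} b_m ∑_{i₁+⋯+i_m=r} ad(Z_{i₁})⋯ad(Z_{i_m})(a)`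
(a list `l` with `l.sum = r` encodes the choice of `m = l.length` and of the tuple
`(i₁, …, i_m)`; all but finitely many summands vanish by nilpotency).  Then for every
`r ≥ 0`, `Z r = ∑_{(Γ,f) ∈ 𝒞_r} b_{(Γ,f)} Z_Γ(f)`, where `𝒞_r` is the set of posetted
binary trees over the chain `b < a` (= `Fin 2`, `0 = b`, `1 = a`) whose local rightmost
leaves are all labelled `a` and having exactly `r` leaves labelled `a`. -/
theorem Zseq_eq_sum_Cr
    (L : Type) [LieRing L] [LieAlgebra ℚ L] [LieRing.IsNilpotent L]
    (a b : L) (Z : ℕ → L) (hZ0 : Z 0 = b)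
    (hZrec : ∀ r : ℕ, Z (r + 1) =
      ((r + 1 : ℚ))⁻¹ • ∑ᶠ l ∈ {l : List ℕ | l.sum = r},
        bseq l.length • (l.map Z).foldr (fun x w => ⁅x, w⁆) a) :
    ∀ r : ℕ, Z r =
      ∑ᶠ t ∈ {t : LTree (Fin 2) | LTree.Mono t ∧ LTree.AllRlm (· = (1 : Fin 2)) t ∧
          (LTree.leafList t).count (1 : Fin 2) = r},
        LTree.coeff bseq t • LTree.evalT (fun i : Fin 2 => if i = 0 then b else a) t := by
    classical
  obtain ⟨N, hN⟩ := LieModule.IsNilpotent.nilpotent ℚ L L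
  have key : ∀ r : ℕ, Z r =
      ∑ᶠ t ∈ Cset r,
        LTree.coeff bseq t • LTree.evalT (fun i : Fin 2 => if i = 0 then b else a) t := by
    intro r
    set g : Fin 2 → L := fun i : Fin 2 => if i = 0 then b else a with hg
    have hga : g 1 = a := by
      rw [hg]; show (if (1 : Fin 2) = 0 then b else a) = a; exact if_neg (by decide)
    have hgb : g 0 = b := by
      rw [hg]; show (if (0 : Fin 2) = 0 then b else a) = b; exact if_pos rfl
    induction r using Nat.strong_induction_on with
    | _ n ih =>
      cases n with
      | zero =>
        rw [Cset_zero, finsum_mem_singleton, coeff_leaf, evalT_leaf, hgb, hZ0, one_smul]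
      | succ r =>
        have ihZ : ∀ i, i ≤ r → Z i = ∑ t ∈ Tfin (2 ^ N) i, coeff bseq t • evalT g t := by
          intro i hi
          rw [ih i (by omega), W_eq_sum g hN i]
        set Lfin : Finset (List ℕ) :=
          (listsUpTo (Finset.range (r + 1)) N).filter (fun l => l.sum = r) with hLfin
        have hB : (∑ᶠ l ∈ {l : List ℕ | l.sum = r},
              bseq l.length • (l.map Z).foldr (fun x w => ⁅x, w⁆) a)
            = ∑ l ∈ Lfin, bseq l.length • (l.map Z).foldr (fun x w => ⁅x, w⁆) a := by
          refine finsum_mem_eq_sum_of_subset _ ?_ ?_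
          · rintro l ⟨hsum0, hsupp⟩
            have hsum : l.sum = r := hsum0
            rw [Function.mem_support] at hsupp
            have hf : (l.map Z).foldr (fun x w => ⁅x, w⁆) a ≠ 0 :=
              fun h0 => hsupp (by rw [h0, smul_zero])
            have hlen : l.length ≤ N := by
              by_contra hh
              exact hf (foldr_eq_zero hN _ a (by simp only [List.length_map]; omega))
            refine Finset.mem_coe.mpr (Finset.mem_filter.mpr
              ⟨mem_listsUpTo _ N l hlen ?_, hsum⟩)
            intro x hx
            have hxs := List.le_sum_of_mem hx
            exact Finset.mem_range.mpr (by omega)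
          · intro l hl
            exact (Finset.mem_filter.mp (Finset.mem_coe.mp hl)).2
        have hC : ∀ l ∈ Lfin, bseq l.length • (l.map Z).foldr (fun x w => ⁅x, w⁆) a
            = ∑ ts ∈ TL (2 ^ N) l, (bseq ts.length * Pprod ts) • Ffold g a ts := by
          intro l hl
          have hsum : l.sum = r := (Finset.mem_filter.mp hl).2
          have hmap : l.map Z
              = l.map (fun i => ∑ t ∈ Tfin (2 ^ N) i, coeff bseq t • evalT g t) := by
            refine List.map_congr_left fun i hi => ihZ i ?_
            have := List.le_sum_of_mem hi; omega
          rw [hmap, expansion g a (2 ^ N) l, Finset.smul_sum]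
          refine Finset.sum_congr rfl fun ts hts => ?_
          have hlen : l.length = ts.length := ((mem_TL l ts).mp hts).length_eq
          rw [smul_smul, hlen]
        set TSfin : Finset (List (LTree (Fin 2))) :=
          Lfin.biUnion (fun l => TL (2 ^ N) l) with hTSfin
        have hdisj : (↑Lfin : Set (List ℕ)).PairwiseDisjoint (fun l => TL (2 ^ N) l) := by
          intro l₁ _ l₂ _ hne
          refine Finset.disjoint_left.mpr fun ts h1 h2 => hne ?_
          rw [(of_mem_TL h1).1, (of_mem_TL h2).1]
        have hbi : (∑ l ∈ Lfin, ∑ ts ∈ TL (2 ^ N) l,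
              (bseq ts.length * Pprod ts) • Ffold g a ts)
            = ∑ ts ∈ TSfin, (bseq ts.length * Pprod ts) • Ffold g a ts :=
          (Finset.sum_biUnion hdisj).symm
        set TS : Set (List (LTree (Fin 2))) :=
          {ts | (∀ t ∈ ts, AllRlm (· = (1 : Fin 2)) t) ∧ (ts.map cnt).sum = r} with hTS
        have hH : (∑ᶠ ts ∈ TS,
              (((r : ℚ) + 1)⁻¹ * (bseq ts.length * Pprod ts)) • Ffold g a ts)
            = ∑ ts ∈ TSfin,
              (((r : ℚ) + 1)⁻¹ * (bseq ts.length * Pprod ts)) • Ffold g a ts := by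
          refine finsum_mem_eq_sum_of_subset _ ?_ ?_
          · rintro ts ⟨⟨hall, hsum⟩, hsupp⟩
            rw [Function.mem_support] at hsupp
            have hF0 : Ffold g a ts ≠ 0 := fun h0 => hsupp (by rw [h0, smul_zero])
            have hlen : ts.length ≤ N := by
              by_contra hh
              exact hF0 (foldr_eq_zero hN _ a (by simp only [List.length_map]; omega))
            have hev : ∀ t ∈ ts, evalT g t ≠ 0 := by
              intro t ht h0
              exact hF0 (foldr_eq_zero_of_mem_zero _ a
                (h0 ▸ List.mem_map_of_mem (f := evalT g) ht))
            have hmemT : ∀ t ∈ ts, t ∈ Tfin (2 ^ N) (cnt t) := by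
              intro t ht
              have hnl : t.numLeaves ≤ 2 ^ N := by
                by_contra hh
                exact hev t ht (evalT_eq_zero g hN t (by omega))
              exact Finset.mem_filter.mpr ⟨mem_treesUpTo _ t hnl, hall t ht, rfl⟩
            refine Finset.mem_coe.mpr (Finset.mem_biUnion.mpr ⟨ts.map cnt, ?_, ?_⟩)
            · refine Finset.mem_filter.mpr
                ⟨mem_listsUpTo _ N _ (by simpa using hlen) ?_, hsum⟩
              intro x hx
              have hxs := List.le_sum_of_mem hx
              exact Finset.mem_range.mpr (by omega)
            · rw [mem_TL, List.forall₂_map_left_iff]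
              exact List.forall₂_same.mpr hmemT
          · intro ts hts
            obtain ⟨l, hl, htl⟩ := Finset.mem_biUnion.mp (Finset.mem_coe.mp hts)
            obtain ⟨hmap, hall⟩ := of_mem_TL htl
            refine ⟨fun t ht => (hall t ht).2, ?_⟩
            rw [← hmap]
            exact (Finset.mem_filter.mp hl).2
        have hI : (∑ᶠ ts ∈ TS,
              (((r : ℚ) + 1)⁻¹ * (bseq ts.length * Pprod ts)) • Ffold g a ts)
            = ∑ᶠ t ∈ Cset (r + 1), coeff bseq t • evalT g t := by
          refine finsum_mem_eq_of_bijOn fromList ⟨?_, ?_, ?_⟩ ?_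
          · rintro ts ⟨hall, hsum⟩
            refine ⟨(allRlm_fromList ts).mpr hall, ?_⟩
            show cnt (fromList ts) = r + 1
            rw [cnt_fromList, hsum]
          · intro ts1 _ ts2 _ h
            rw [← toList_fromList ts1, h, toList_fromList]
          · rintro t ht
            have hrml : rml t = 1 := rml_eq_one_of_mem_Cset ht
            refine ⟨toList t, ⟨allRlm_toList t ht.1, ?_⟩, fromList_toList t hrml⟩
            have hc := cnt_fromList (toList t)
            rw [fromList_toList t hrml] at hc
            have h2 : cnt t = r + 1 := ht.2
            omega
          · rintro ts ⟨hall, hsum⟩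
            rw [coeff_fromList, evalT_fromList, hsum, hga]
            show _ = (bseq ts.length / ((r + 1 : ℕ) : ℚ) * (ts.map (coeff bseq)).prod)
              • Ffold g a ts
            have hsc : (((r : ℚ) + 1)⁻¹ * (bseq ts.length * Pprod ts))
                = bseq ts.length / ((r + 1 : ℕ) : ℚ) * (ts.map (coeff bseq)).prod := by
              rw [Pprod]
              push_cast
              ring
            rw [hsc]
        calc Z (r + 1)
            = ((r : ℚ) + 1)⁻¹ • ∑ᶠ l ∈ {l : List ℕ | l.sum = r},
                bseq l.length • (l.map Z).foldr (fun x w => ⁅x, w⁆) a := hZrec r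
          _ = ((r : ℚ) + 1)⁻¹ • ∑ l ∈ Lfin,
                bseq l.length • (l.map Z).foldr (fun x w => ⁅x, w⁆) a := by rw [hB]
          _ = ((r : ℚ) + 1)⁻¹ • ∑ l ∈ Lfin, ∑ ts ∈ TL (2 ^ N) l,
                (bseq ts.length * Pprod ts) • Ffold g a ts := by
              rw [Finset.sum_congr rfl hC]
          _ = ((r : ℚ) + 1)⁻¹ • ∑ ts ∈ TSfin,
                (bseq ts.length * Pprod ts) • Ffold g a ts := by rw [hbi]
          _ = ∑ ts ∈ TSfin,
                (((r : ℚ) + 1)⁻¹ * (bseq ts.length * Pprod ts)) • Ffold g a ts := by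
              rw [Finset.smul_sum]
              simp_rw [smul_smul]
          _ = ∑ᶠ ts ∈ TS,
                (((r : ℚ) + 1)⁻¹ * (bseq ts.length * Pprod ts)) • Ffold g a ts := hH.symm
          _ = ∑ᶠ t ∈ Cset (r + 1), coeff bseq t • evalT g t := hI
  intro r
  have hset : {t : LTree (Fin 2) | LTree.Mono t ∧ LTree.AllRlm (· = (1 : Fin 2)) t ∧
      (LTree.leafList t).count (1 : Fin 2) = r} = Cset r := by
    ext t
    exact ⟨fun h => ⟨h.2.1, h.2.2⟩, fun h => ⟨mono_of_allRlm t h.1, h.1, h.2⟩⟩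
  rw [hset, key r]
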